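/- arXiv:2007.01080 — 3 statements merged into one kernel-verified Lean document; each statement's English description precedes it below -/
import Mathlib

section
/- Let $L:\mathbb{R}^d\to\mathbb{R}^{d'}$ be a surjective linear map, let $s>0$ and $M$ be sufficiently large (e.g. $M> d$). Define $M_s^d g(x):=\big(\sup_{Q\ni x}\frac{1}{\ell(Q)^d}\int_{\mathbb{R}^d}|g(y)|^s (1+\frac{|y-c_Q|^2}{\ell(Q)^2})^{-M}dy\big)^{1/s}$ (supremum over cubes in $\mathbb{R}^d$, with $c_Q$ the center and $\ell(Q)$ the sidelength), and analogously $M_s^{d'}$ on $\mathbb{R}^{d'}$ with decay exponent $M-(d-d')$. Then there is a constant $C$ depending only on $L$, $s$, $d$, $d'$, $M$ such that $M_s^d(f\circ L)(x) \le C\, (M_s^{d'} f)(Lx)$ for every measurable $f:\mathbb{R}^{d'}\to\mathbb{C}$ and every $x\in\mathbb{R}^d$. -/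
open MeasureTheory ENNReal

/-- The maximal function with smooth truncations: for a cube determined by center `c` and
sidelength `ℓ`, the smooth average is `ℓ^{-d} ∫ |g(y)|^s (1+|y-c|²/ℓ²)^{-M} dy`, and the
supremum runs over all cubes containing `x`. -/
noncomputable def smoothMax (d : ℕ) (s Mexp : ℝ)
    (g : EuclideanSpace ℝ (Fin d) → ℂ) (x : EuclideanSpace ℝ (Fin d)) : ℝ≥0∞ :=
  ⨆ (c : EuclideanSpace ℝ (Fin d)) (ℓ : ℝ) (_ : 0 < ℓ) (_ : ∀ i, |x i - c i| ≤ ℓ / 2),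
    ((ENNReal.ofReal (ℓ ^ d))⁻¹ *
        ∫⁻ y, ENNReal.ofReal (‖g y‖ ^ s * (1 + ‖y - c‖ ^ 2 / ℓ ^ 2) ^ (-Mexp))) ^ (1 / s)

namespace SmoothMaxAux

lemma rpow_neg_anti {a b M : ℝ} (hM : 0 ≤ M) (ha : 0 < a) (hab : a ≤ b) :
    b ^ (-M) ≤ a ^ (-M) := by
  have hb : (0:ℝ) < b := lt_of_lt_of_le ha hab
  rw [Real.rpow_neg hb.le, Real.rpow_neg ha.le]
  exact inv_anti₀ (Real.rpow_pos_of_pos ha M) (Real.rpow_le_rpow ha.le hab hM)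

lemma split_weight {a b Mexp N : ℝ} (ha : 0 ≤ a) (hb : 0 ≤ b) (hN : 0 ≤ N) (hNM : N ≤ Mexp) :
    (1 + (a + b)) ^ (-Mexp) ≤ (1 + a) ^ (-(Mexp - N)) * (1 + b) ^ (-N) := by
  have h1 : (0:ℝ) < 1 + (a + b) := by linarith
  have h2 : (1 + (a + b)) ^ (-Mexp)
      = (1 + (a + b)) ^ (-(Mexp - N)) * (1 + (a + b)) ^ (-N) := by
    rw [← Real.rpow_add h1]; ring_nf
  rw [h2]
  have l1 : (1 + (a + b)) ^ (-(Mexp - N)) ≤ (1 + a) ^ (-(Mexp - N)) :=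
    rpow_neg_anti (by linarith) (by linarith) (by linarith)
  have l2 : (1 + (a + b)) ^ (-N) ≤ (1 + b) ^ (-N) :=
    rpow_neg_anti hN (by linarith) (by linarith)
  exact mul_le_mul l1 l2 (Real.rpow_nonneg (by linarith) _) (Real.rpow_nonneg (by linarith) _)

lemma coord_le_norm {n : ℕ} (v : EuclideanSpace ℝ (Fin n)) (i : Fin n) : |v i| ≤ ‖v‖ := by
  rw [EuclideanSpace.norm_eq]
  have h1 : |v i| = Real.sqrt (‖v i‖ ^ 2) := by
    rw [Real.sqrt_sq (norm_nonneg _), Real.norm_eq_abs]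
  rw [h1]
  apply Real.sqrt_le_sqrt
  exact Finset.single_le_sum (f := fun j => ‖v j‖ ^ 2) (fun j _ => by positivity)
    (Finset.mem_univ i)

lemma norm_le_of_coords {n : ℕ} {x c : EuclideanSpace ℝ (Fin n)} {t : ℝ} (ht : 0 ≤ t)
    (h : ∀ i, |x i - c i| ≤ t) : ‖x - c‖ ≤ Real.sqrt n * t := by
  rw [EuclideanSpace.norm_eq]
  have h1 : ∀ i, ‖(x - c) i‖ ^ 2 ≤ t ^ 2 := by
    intro i
    rw [PiLp.sub_apply, Real.norm_eq_abs]
    exact pow_le_pow_left₀ (abs_nonneg _) (h i) 2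
  calc Real.sqrt (∑ i, ‖(x - c) i‖ ^ 2) ≤ Real.sqrt (∑ _i : Fin n, t ^ 2) :=
        Real.sqrt_le_sqrt (Finset.sum_le_sum fun i _ => h1 i)
    _ = Real.sqrt n * t := by
        rw [Finset.sum_const, Finset.card_univ, Fintype.card_fin, nsmul_eq_mul,
          Real.sqrt_mul (by positivity), Real.sqrt_sq ht]

lemma finite_Ck (k : ℕ) :
    ∫⁻ v : EuclideanSpace ℝ (Fin k), ENNReal.ofReal ((1 + ‖v‖ ^ 2) ^ (-(k : ℝ))) < ∞ := by
  rcases Nat.eq_zero_or_pos k with hk | hk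
  · subst hk
    calc ∫⁻ v : EuclideanSpace ℝ (Fin 0), ENNReal.ofReal ((1 + ‖v‖ ^ 2) ^ (-((0:ℕ) : ℝ)))
        ≤ ∫⁻ _v : EuclideanSpace ℝ (Fin 0), 1 := by
          refine lintegral_mono fun v => ?_
          have h1 : ((1:ℝ) + ‖v‖ ^ 2) ^ (-((0:ℕ) : ℝ)) = 1 := by
            norm_num
          rw [h1]; simp
      _ = volume (Set.univ : Set (EuclideanSpace ℝ (Fin 0))) := by
          simpa using (lintegral_const 1)
      _ < ∞ := measure_lt_top _ _
  · have hr : (Module.finrank ℝ (EuclideanSpace ℝ (Fin k)) : ℝ) < 2 * k := by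
      rw [finrank_euclideanSpace_fin]
      have : (1:ℝ) ≤ (k:ℝ) := by exact_mod_cast hk
      linarith
    have hpt : ∀ v : EuclideanSpace ℝ (Fin k),
        ENNReal.ofReal ((1 + ‖v‖ ^ 2) ^ (-(k : ℝ)))
          ≤ ENNReal.ofReal ((2:ℝ) ^ ((2 * (k:ℝ)) / 2)) *
            ENNReal.ofReal ((1 + ‖v‖) ^ (-(2 * (k:ℝ)))) := by
      intro v
      rw [← ENNReal.ofReal_mul (by positivity)]
      apply ENNReal.ofReal_le_ofReal
      have h2 : (-(k:ℝ)) = -(2 * (k:ℝ)) / 2 := by ring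
      rw [h2]
      exact rpow_neg_one_add_norm_sq_le v (by positivity)
    calc ∫⁻ v : EuclideanSpace ℝ (Fin k), ENNReal.ofReal ((1 + ‖v‖ ^ 2) ^ (-(k : ℝ)))
        ≤ ∫⁻ v : EuclideanSpace ℝ (Fin k),
            ENNReal.ofReal ((2:ℝ) ^ ((2 * (k:ℝ)) / 2)) *
              ENNReal.ofReal ((1 + ‖v‖) ^ (-(2 * (k:ℝ)))) := lintegral_mono hpt
      _ = ENNReal.ofReal ((2:ℝ) ^ ((2 * (k:ℝ)) / 2)) *
            ∫⁻ v : EuclideanSpace ℝ (Fin k), ENNReal.ofReal ((1 + ‖v‖) ^ (-(2 * (k:ℝ)))) :=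
          lintegral_const_mul' _ _ ENNReal.ofReal_ne_top
      _ < ∞ := ENNReal.mul_lt_top ENNReal.ofReal_lt_top (finite_integral_one_add_norm hr)

lemma shift_scale (k : ℕ) (c₂ : EuclideanSpace ℝ (Fin k)) {ρ : ℝ} (hρ : 0 < ρ) :
    ∫⁻ u : EuclideanSpace ℝ (Fin k), ENNReal.ofReal ((1 + ‖u - c₂‖ ^ 2 / ρ ^ 2) ^ (-(k : ℝ)))
      = ENNReal.ofReal (ρ ^ k) *
        ∫⁻ v : EuclideanSpace ℝ (Fin k), ENNReal.ofReal ((1 + ‖v‖ ^ 2) ^ (-(k : ℝ))) := by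
  set G : EuclideanSpace ℝ (Fin k) → ℝ≥0∞ :=
    fun u => ENNReal.ofReal ((1 + ‖u‖ ^ 2 / ρ ^ 2) ^ (-(k : ℝ))) with hG
  have hGmeas : Measurable G := by
    rw [hG]; fun_prop
  -- translation
  have step1 : ∫⁻ u : EuclideanSpace ℝ (Fin k),
      ENNReal.ofReal ((1 + ‖u - c₂‖ ^ 2 / ρ ^ 2) ^ (-(k : ℝ))) = ∫⁻ u, G u := by
    calc ∫⁻ u : EuclideanSpace ℝ (Fin k),
          ENNReal.ofReal ((1 + ‖u - c₂‖ ^ 2 / ρ ^ 2) ^ (-(k : ℝ)))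
        = ∫⁻ u, G (u + -c₂) := by
          simp_rw [hG, sub_eq_add_neg]
      _ = ∫⁻ u, G u := lintegral_add_right_eq_self G (-c₂)
  -- scaling
  have hmap := Measure.map_addHaar_smul (volume : Measure (EuclideanSpace ℝ (Fin k))) hρ.ne'
  rw [finrank_euclideanSpace_fin] at hmap
  have step2 : ∫⁻ v : EuclideanSpace ℝ (Fin k), G (ρ • v)
      = ENNReal.ofReal (|((ρ:ℝ) ^ k)⁻¹|) * ∫⁻ u, G u := by
    calc ∫⁻ v : EuclideanSpace ℝ (Fin k), G (ρ • v)
        = ∫⁻ y, G y ∂((volume : Measure (EuclideanSpace ℝ (Fin k))).map (ρ • ·)) :=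
          (lintegral_map hGmeas (measurable_const_smul ρ)).symm
      _ = ENNReal.ofReal (|((ρ:ℝ) ^ k)⁻¹|) * ∫⁻ u, G u := by
          rw [hmap]; simp [lintegral_smul_measure]
  have step3 : ∀ v : EuclideanSpace ℝ (Fin k),
      G (ρ • v) = ENNReal.ofReal ((1 + ‖v‖ ^ 2) ^ (-(k : ℝ))) := by
    intro v
    simp only [hG]
    have hn : ‖ρ • v‖ ^ 2 / ρ ^ 2 = ‖v‖ ^ 2 := by
      rw [norm_smul, Real.norm_eq_abs, mul_pow, sq_abs]
      field_simp
    rw [hn]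
  have hpow : (0:ℝ) < ρ ^ k := by positivity
  rw [step1]
  have h2 := step2
  simp_rw [step3] at h2
  rw [h2, ← mul_assoc, ← ENNReal.ofReal_mul hpow.le,
    abs_of_pos (by positivity : (0:ℝ) < (ρ ^ k)⁻¹),
    mul_inv_cancel₀ hpow.ne', ENNReal.ofReal_one, one_mul]

lemma weight_bound {Mexp kR M' ℓ A K₀ : ℝ} (hkR : 0 ≤ kR) (hkM : kR ≤ Mexp)
    (hM' : M' = Mexp - kR) (hℓ : 0 < ℓ) (hA : 1 ≤ A) (hK : 1 ≤ K₀)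
    {a b q : ℝ} (ha : 0 ≤ a) (hb : 0 ≤ b)
    (hq : a ^ 2 / (2 * A ^ 2 * ℓ ^ 2) + b ^ 2 / (2 * A ^ 2 * ℓ ^ 2) ≤ q) :
    (1 + q) ^ (-Mexp) ≤
      (max (2 * A ^ 2 / K₀ ^ 2) 1) ^ M' * (1 + a ^ 2 / (K₀ * ℓ) ^ 2) ^ (-M') *
        (1 + b ^ 2 / (2 * A ^ 2 * ℓ ^ 2)) ^ (-kR) := by
  have hM'0 : 0 ≤ M' := by rw [hM']; linarith
  set γ := max (2 * A ^ 2 / K₀ ^ 2) 1 with hγdef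
  have hγ1 : (1:ℝ) ≤ γ := le_max_right _ _
  have hγ0 : (0:ℝ) < γ := by linarith
  set a₀ := a ^ 2 / (2 * A ^ 2 * ℓ ^ 2) with ha₀def
  set b₀ := b ^ 2 / (2 * A ^ 2 * ℓ ^ 2) with hb₀def
  have ha₀ : 0 ≤ a₀ := by positivity
  have hb₀ : 0 ≤ b₀ := by positivity
  have h1 : (1 + q) ^ (-Mexp) ≤ (1 + (a₀ + b₀)) ^ (-Mexp) :=
    rpow_neg_anti (by linarith) (by linarith) (by linarith)
  have h2 : (1 + (a₀ + b₀)) ^ (-Mexp) ≤ (1 + a₀) ^ (-(Mexp - kR)) * (1 + b₀) ^ (-kR) :=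
    split_weight ha₀ hb₀ hkR hkM
  have h3 : (1 + a₀) ^ (-(Mexp - kR)) ≤ γ ^ M' * (1 + a ^ 2 / (K₀ * ℓ) ^ 2) ^ (-M') := by
    rw [show -(Mexp - kR) = -M' by rw [hM']]
    have key : 1 + a ^ 2 / (K₀ * ℓ) ^ 2 ≤ γ * (1 + a₀) := by
      have hKpos : (0:ℝ) < K₀ := by linarith
      have hApos : (0:ℝ) < A := by linarith
      have e1 : a ^ 2 / (K₀ * ℓ) ^ 2 = (2 * A ^ 2 / K₀ ^ 2) * a₀ := by
        rw [ha₀def]; field_simp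
      have e2 : (2 * A ^ 2 / K₀ ^ 2) * a₀ ≤ γ * a₀ :=
        mul_le_mul_of_nonneg_right (le_max_left _ _) ha₀
      calc 1 + a ^ 2 / (K₀ * ℓ) ^ 2 = 1 + (2 * A ^ 2 / K₀ ^ 2) * a₀ := by rw [e1]
        _ ≤ γ + γ * a₀ := add_le_add hγ1 e2
        _ = γ * (1 + a₀) := by ring
    have h4 : (γ * (1 + a₀)) ^ (-M') ≤ (1 + a ^ 2 / (K₀ * ℓ) ^ 2) ^ (-M') :=
      rpow_neg_anti hM'0 (by positivity) key
    have h5 : (γ * (1 + a₀)) ^ (-M') = γ ^ (-M') * (1 + a₀) ^ (-M') :=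
      Real.mul_rpow hγ0.le (by linarith)
    calc (1 + a₀) ^ (-M') = γ ^ M' * (γ ^ (-M') * (1 + a₀) ^ (-M')) := by
          rw [← mul_assoc, ← Real.rpow_add hγ0]
          simp
      _ = γ ^ M' * (γ * (1 + a₀)) ^ (-M') := by rw [← h5]
      _ ≤ γ ^ M' * (1 + a ^ 2 / (K₀ * ℓ) ^ 2) ^ (-M') :=
          mul_le_mul_of_nonneg_left h4 (Real.rpow_nonneg hγ0.le _)
  calc (1 + q) ^ (-Mexp) ≤ (1 + a₀) ^ (-(Mexp - kR)) * (1 + b₀) ^ (-kR) := h1.trans h2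
    _ ≤ γ ^ M' * (1 + a ^ 2 / (K₀ * ℓ) ^ 2) ^ (-M') * (1 + b₀) ^ (-kR) :=
        mul_le_mul_of_nonneg_right h3 (Real.rpow_nonneg (by linarith) _)

lemma exists_equiv (d d' : ℕ) (L : EuclideanSpace ℝ (Fin d) →ₗ[ℝ] EuclideanSpace ℝ (Fin d'))
    (hL : Function.Surjective L) :
    ∃ (k : ℕ) (e : (EuclideanSpace ℝ (Fin d') × EuclideanSpace ℝ (Fin k)) ≃L[ℝ]
      EuclideanSpace ℝ (Fin d)), d' + k = d ∧ ∀ p, L (e p) = p.1 := by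
  classical
  set k := Module.finrank ℝ (LinearMap.ker L) with hk
  have hrank : d' + k = d := by
    have h1 := LinearMap.finrank_range_add_finrank_ker L
    rw [LinearMap.range_eq_top.2 hL] at h1
    simpa [finrank_top, finrank_euclideanSpace_fin] using h1
  obtain ⟨g, hg⟩ := L.exists_rightInverse_of_surjective (LinearMap.range_eq_top.2 hL)
  have hgL : ∀ z, L (g z) = z := fun z => by
    have h2 := LinearMap.ext_iff.1 hg z
    simpa using h2
  obtain ⟨ι⟩ : Nonempty (EuclideanSpace ℝ (Fin k) ≃ₗ[ℝ] LinearMap.ker L) :=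
    FiniteDimensional.nonempty_linearEquiv_of_finrank_eq
      (by simp [finrank_euclideanSpace_fin, hk])
  set F : (EuclideanSpace ℝ (Fin d') × EuclideanSpace ℝ (Fin k)) →ₗ[ℝ]
      EuclideanSpace ℝ (Fin d) :=
    LinearMap.coprod g ((LinearMap.ker L).subtype ∘ₗ (ι : EuclideanSpace ℝ (Fin k) →ₗ[ℝ] LinearMap.ker L)) with hF
  have hLF : ∀ p, L (F p) = p.1 := by
    rintro ⟨z, u⟩
    simp only [hF, LinearMap.coprod_apply, map_add, LinearMap.comp_apply,
      Submodule.coe_subtype, LinearEquiv.coe_coe]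
    rw [hgL]
    have h3 : L ((ι u : LinearMap.ker L) : EuclideanSpace ℝ (Fin d)) = 0 :=
      LinearMap.mem_ker.1 (ι u).2
    rw [h3, add_zero]
  have hinj : Function.Injective F := by
    rw [← LinearMap.ker_eq_bot, LinearMap.ker_eq_bot']
    rintro ⟨z, u⟩ h0
    have hz : z = 0 := by
      have h4 := hLF (z, u)
      rw [h0, map_zero] at h4
      exact h4.symm
    subst hz
    have h5 : ((ι u : LinearMap.ker L) : EuclideanSpace ℝ (Fin d)) = 0 := by
      have := h0
      simpa [hF, LinearMap.coprod_apply] using this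
    have hu : ι u = 0 := Subtype.ext h5
    have hu0 : u = 0 := by
      have := congrArg ι.symm hu
      simpa using this
    simp [hu0, Prod.ext_iff]
  have hsurj : Function.Surjective F := by
    intro y
    have hmem : y - g (L y) ∈ LinearMap.ker L := by
      rw [LinearMap.mem_ker, map_sub, hgL, sub_self]
    refine ⟨(L y, ι.symm ⟨y - g (L y), hmem⟩), ?_⟩
    simp only [hF, LinearMap.coprod_apply, LinearMap.comp_apply, Submodule.coe_subtype,
      LinearEquiv.coe_coe]
    rw [ι.apply_symm_apply]
    simp
  let e0 := LinearEquiv.ofBijective F ⟨hinj, hsurj⟩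
  refine ⟨k, e0.toContinuousLinearEquiv, hrank, fun p => hLF p⟩

end SmoothMaxAux

set_option maxHeartbeats 2000000 in
open SmoothMaxAux in
/-- Composition with a surjective linear map `L : ℝ^d → ℝ^{d'}` commutes with the smooth
maximal function, up to a constant: `M_s^d(f ∘ L)(x) ≤ C (M_s^{d'} f)(Lx)`, where the
target maximal function has decay exponent `M - (d - d')`. -/
theorem stmt6 (d d' : ℕ)
    (L : EuclideanSpace ℝ (Fin d) →ₗ[ℝ] EuclideanSpace ℝ (Fin d'))
    (hL : Function.Surjective L) (s Mexp : ℝ) (hs : 0 < s) (hM : (d : ℝ) < Mexp) :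
    ∃ C : ℝ≥0∞, C ≠ ∞ ∧
      ∀ (f : EuclideanSpace ℝ (Fin d') → ℂ), Measurable f →
        ∀ x, smoothMax d s Mexp (fun y => f (L y)) x
          ≤ C * smoothMax d' s (Mexp - ((d : ℝ) - (d' : ℝ))) f (L x) := by
  obtain ⟨k, e, hrank, hLe⟩ := exists_equiv d d' L hL
  have hkR : (k : ℝ) = (d : ℝ) - (d' : ℝ) := by
    have h0 : ((d' : ℝ)) + (k : ℝ) = (d : ℝ) := by exact_mod_cast hrank
    linarith
  set M' := Mexp - ((d : ℝ) - (d' : ℝ)) with hM'def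
  have hM'k : M' = Mexp - (k : ℝ) := by rw [hM'def, hkR]
  have hd'0 : (0:ℝ) ≤ (d' : ℝ) := by positivity
  have hkM : (k : ℝ) ≤ Mexp := by rw [hkR]; linarith
  have hM'0 : 0 < M' := by rw [hM'def]; linarith
  set A : ℝ := max ‖((e.symm : EuclideanSpace ℝ (Fin d) ≃L[ℝ]
      EuclideanSpace ℝ (Fin d') × EuclideanSpace ℝ (Fin k)) :
      EuclideanSpace ℝ (Fin d) →L[ℝ] EuclideanSpace ℝ (Fin d') × EuclideanSpace ℝ (Fin k))‖ 1
    with hAdef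
  have hA1 : (1:ℝ) ≤ A := le_max_right _ _
  have hA0 : (0:ℝ) < A := lt_of_lt_of_le one_pos hA1
  set LC := LinearMap.toContinuousLinearMap L with hLCdef
  set K₀ : ℝ := max (‖LC‖ * Real.sqrt d) 1 with hK₀def
  have hK₀1 : (1:ℝ) ≤ K₀ := le_max_right _ _
  have hK₀0 : (0:ℝ) < K₀ := lt_of_lt_of_le one_pos hK₀1
  set γ : ℝ := max (2 * A ^ 2 / K₀ ^ 2) 1 with hγdef
  have hγ1 : (1:ℝ) ≤ γ := le_max_right _ _
  set D : ℝ := γ ^ M' with hDdef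
  have hD0 : (0:ℝ) < D := Real.rpow_pos_of_pos (by linarith) _
  set Ck := ∫⁻ v : EuclideanSpace ℝ (Fin k), ENNReal.ofReal ((1 + ‖v‖ ^ 2) ^ (-(k : ℝ)))
    with hCkdef
  have hCktop : Ck < ∞ := finite_Ck k
  haveI hHaarProd : Measure.IsAddHaarMeasure
      (volume : Measure (EuclideanSpace ℝ (Fin d') × EuclideanSpace ℝ (Fin k))) := by
    rw [Measure.volume_eq_prod]; exact Measure.prod.instIsAddHaarMeasure _ _
  haveI hHaarMap : Measure.IsAddHaarMeasure
      ((volume : Measure (EuclideanSpace ℝ (Fin d') × EuclideanSpace ℝ (Fin k))).map e) :=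
    e.isAddHaarMeasure_map volume
  set cH : NNReal := Measure.addHaarScalarFactor
    ((volume : Measure (EuclideanSpace ℝ (Fin d') × EuclideanSpace ℝ (Fin k))).map e)
    (volume : Measure (EuclideanSpace ℝ (Fin d))) with hcHdef
  have hmap : (volume : Measure (EuclideanSpace ℝ (Fin d') × EuclideanSpace ℝ (Fin k))).map e
      = (cH : ℝ≥0∞) • (volume : Measure (EuclideanSpace ℝ (Fin d))) := by
    rw [hcHdef]
    exact Measure.isAddLeftInvariant_eq_smul _ _
  have hcH0 : (0:NNReal) < cH := by
    rw [hcHdef]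
    exact Measure.addHaarScalarFactor_pos_of_isAddHaarMeasure _ _
  have hcHne : (cH : ℝ≥0∞) ≠ 0 := by exact_mod_cast hcH0.ne'
  have hcHtop : (cH : ℝ≥0∞) ≠ ∞ := ENNReal.coe_ne_top
  set C₁ : ℝ≥0∞ := (cH : ℝ≥0∞)⁻¹ * Ck *
    ENNReal.ofReal ((Real.sqrt 2 * A) ^ k * D * K₀ ^ d') with hC₁def
  have hC₁top : C₁ ≠ ∞ := by
    rw [hC₁def]
    exact ENNReal.mul_ne_top (ENNReal.mul_ne_top (ENNReal.inv_ne_top.2 hcHne) hCktop.ne)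
      ENNReal.ofReal_ne_top
  refine ⟨C₁ ^ (1 / s), ENNReal.rpow_ne_top_of_nonneg (by positivity) hC₁top, ?_⟩
  intro f hf x
  simp only [smoothMax]
  refine iSup_le fun c => iSup_le fun ℓ => iSup_le fun hℓ => iSup_le fun hx => ?_
  -- geometry: the target cube
  have hxc : ‖x - c‖ ≤ Real.sqrt d * (ℓ / 2) := norm_le_of_coords (by positivity) hx
  have hx' : ∀ i, |(L x) i - (L c) i| ≤ K₀ * ℓ / 2 := by
    intro i
    have h3 : LC (x - c) = L x - L c := map_sub L x c
    have h2 : (L x) i - (L c) i = (LC (x - c)) i := by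
      rw [h3, PiLp.sub_apply]
    rw [h2]
    calc |(LC (x - c)) i| ≤ ‖LC (x - c)‖ := coord_le_norm _ i
      _ ≤ ‖LC‖ * ‖x - c‖ := LC.le_opNorm _
      _ ≤ ‖LC‖ * (Real.sqrt d * (ℓ / 2)) := mul_le_mul_of_nonneg_left hxc (norm_nonneg _)
      _ = ‖LC‖ * Real.sqrt d * ℓ / 2 := by ring
      _ ≤ K₀ * ℓ / 2 := by
          have h4 : ‖LC‖ * Real.sqrt d ≤ K₀ := le_max_left _ _
          have h5 := mul_le_mul_of_nonneg_right h4 hℓ.le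
          linarith
  set ρ : ℝ := Real.sqrt 2 * A * ℓ with hρdef
  have hρ0 : 0 < ρ := by rw [hρdef]; positivity
  set c₂ := (e.symm c).2 with hc₂def
  have hLc : (e.symm c).1 = L c := by
    have h5 := hLe (e.symm c)
    rw [e.apply_symm_apply] at h5
    exact h5.symm
  have hLm : Measurable (⇑L : EuclideanSpace ℝ (Fin d) → EuclideanSpace ℝ (Fin d')) :=
    LC.continuous.measurable
  set h : EuclideanSpace ℝ (Fin d) → ℝ≥0∞ :=
    fun y => ENNReal.ofReal (‖f (L y)‖ ^ s * (1 + ‖y - c‖ ^ 2 / ℓ ^ 2) ^ (-Mexp)) with hhdef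
  have hmeas_h : Measurable h := by
    rw [hhdef]
    have h6 : Measurable fun y => f (L y) := hf.comp hLm
    fun_prop
  -- change of variables
  have hIp : ∫⁻ y, h y = (cH : ℝ≥0∞)⁻¹ * ∫⁻ p, h (e p) := by
    have h7 : ∫⁻ p, h (e p) = ∫⁻ y, h y
        ∂((volume : Measure (EuclideanSpace ℝ (Fin d') × EuclideanSpace ℝ (Fin k))).map e) :=
      (lintegral_map hmeas_h e.continuous.measurable).symm
    rw [hmap, lintegral_smul_measure] at h7
    rw [h7, smul_eq_mul, ← mul_assoc, ENNReal.inv_mul_cancel hcHne hcHtop, one_mul]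
  have hmeasp : Measurable fun p : EuclideanSpace ℝ (Fin d') × EuclideanSpace ℝ (Fin k) =>
      h (e p) := hmeas_h.comp e.continuous.measurable
  have hFub : ∫⁻ p, h (e p) = ∫⁻ z, ∫⁻ u, h (e (z, u)) := by
    rw [Measure.volume_eq_prod]
    exact lintegral_prod _ hmeasp.aemeasurable
  -- pointwise estimate
  have hpt : ∀ z u, h (e (z, u)) ≤
      ENNReal.ofReal (‖f z‖ ^ s * (D * (1 + ‖z - L c‖ ^ 2 / (K₀ * ℓ) ^ 2) ^ (-M'))) *
        ENNReal.ofReal ((1 + ‖u - c₂‖ ^ 2 / ρ ^ 2) ^ (-(k : ℝ))) := by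
    intro z u
    have hz1 : L (e (z, u)) = z := hLe (z, u)
    have hsub : ((z, u) - e.symm c) = e.symm (e (z, u) - c) := by
      rw [map_sub, e.symm_apply_apply]
    have hbound : ∀ w : EuclideanSpace ℝ (Fin d), ‖e.symm w‖ ≤ A * ‖w‖ := by
      intro w
      have h7 := ContinuousLinearMap.le_opNorm
        ((e.symm : EuclideanSpace ℝ (Fin d) ≃L[ℝ]
          EuclideanSpace ℝ (Fin d') × EuclideanSpace ℝ (Fin k)) :
          EuclideanSpace ℝ (Fin d) →L[ℝ]
            EuclideanSpace ℝ (Fin d') × EuclideanSpace ℝ (Fin k)) w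
      rw [ContinuousLinearEquiv.coe_coe] at h7
      exact h7.trans (mul_le_mul_of_nonneg_right (le_max_left _ _) (norm_nonneg _))
    have hfst : ‖z - L c‖ ≤ A * ‖e (z, u) - c‖ := by
      have h8 : z - L c = ((z, u) - e.symm c).1 := by
        rw [Prod.fst_sub, hLc]
      calc ‖z - L c‖ = ‖((z, u) - e.symm c).1‖ := by rw [h8]
        _ ≤ ‖(z, u) - e.symm c‖ := norm_fst_le _
        _ = ‖e.symm (e (z, u) - c)‖ := by rw [hsub]
        _ ≤ A * ‖e (z, u) - c‖ := hbound _
    have hsnd : ‖u - c₂‖ ≤ A * ‖e (z, u) - c‖ := by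
      have h8 : u - c₂ = ((z, u) - e.symm c).2 := by
        rw [Prod.snd_sub, hc₂def]
      calc ‖u - c₂‖ = ‖((z, u) - e.symm c).2‖ := by rw [h8]
        _ ≤ ‖(z, u) - e.symm c‖ := norm_snd_le _
        _ = ‖e.symm (e (z, u) - c)‖ := by rw [hsub]
        _ ≤ A * ‖e (z, u) - c‖ := hbound _
    have hq : ‖z - L c‖ ^ 2 / (2 * A ^ 2 * ℓ ^ 2) + ‖u - c₂‖ ^ 2 / (2 * A ^ 2 * ℓ ^ 2)
        ≤ ‖e (z, u) - c‖ ^ 2 / ℓ ^ 2 := by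
      have h9 : ‖z - L c‖ ^ 2 ≤ A ^ 2 * ‖e (z, u) - c‖ ^ 2 := by
        nlinarith [norm_nonneg (z - L c), norm_nonneg (e (z, u) - c)]
      have h10 : ‖u - c₂‖ ^ 2 ≤ A ^ 2 * ‖e (z, u) - c‖ ^ 2 := by
        nlinarith [norm_nonneg (u - c₂), norm_nonneg (e (z, u) - c)]
      have h11 : ‖z - L c‖ ^ 2 / (2 * A ^ 2 * ℓ ^ 2) ≤ ‖e (z, u) - c‖ ^ 2 / (2 * ℓ ^ 2) := by
        rw [div_le_div_iff₀ (by positivity) (by positivity)]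
        nlinarith [sq_nonneg ℓ]
      have h12 : ‖u - c₂‖ ^ 2 / (2 * A ^ 2 * ℓ ^ 2) ≤ ‖e (z, u) - c‖ ^ 2 / (2 * ℓ ^ 2) := by
        rw [div_le_div_iff₀ (by positivity) (by positivity)]
        nlinarith [sq_nonneg ℓ]
      calc ‖z - L c‖ ^ 2 / (2 * A ^ 2 * ℓ ^ 2) + ‖u - c₂‖ ^ 2 / (2 * A ^ 2 * ℓ ^ 2)
          ≤ ‖e (z, u) - c‖ ^ 2 / (2 * ℓ ^ 2) + ‖e (z, u) - c‖ ^ 2 / (2 * ℓ ^ 2) :=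
            add_le_add h11 h12
        _ = ‖e (z, u) - c‖ ^ 2 / ℓ ^ 2 := by ring
    have hw := weight_bound (Mexp := Mexp) (kR := (k : ℝ)) (M' := M') (ℓ := ℓ) (A := A)
      (K₀ := K₀) (by positivity) hkM hM'k hℓ hA1 hK₀1 (norm_nonneg (z - L c))
      (norm_nonneg (u - c₂)) hq
    have hρ2 : ρ ^ 2 = 2 * A ^ 2 * ℓ ^ 2 := by
      rw [hρdef, mul_pow, mul_pow, Real.sq_sqrt (by norm_num : (0:ℝ) ≤ 2)]
    rw [hhdef]
    simp only []
    rw [hz1, ← ENNReal.ofReal_mul (by positivity)]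
    apply ENNReal.ofReal_le_ofReal
    have hfz : (0:ℝ) ≤ ‖f z‖ ^ s := Real.rpow_nonneg (norm_nonneg _) _
    calc ‖f z‖ ^ s * (1 + ‖e (z, u) - c‖ ^ 2 / ℓ ^ 2) ^ (-Mexp)
        ≤ ‖f z‖ ^ s * (γ ^ M' * (1 + ‖z - L c‖ ^ 2 / (K₀ * ℓ) ^ 2) ^ (-M') *
            (1 + ‖u - c₂‖ ^ 2 / (2 * A ^ 2 * ℓ ^ 2)) ^ (-(k : ℝ))) :=
          mul_le_mul_of_nonneg_left hw hfz
      _ = ‖f z‖ ^ s * (D * (1 + ‖z - L c‖ ^ 2 / (K₀ * ℓ) ^ 2) ^ (-M')) *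
            (1 + ‖u - c₂‖ ^ 2 / ρ ^ 2) ^ (-(k : ℝ)) := by
          rw [hρ2, hDdef]; ring
  -- inner integral
  have hInner : ∀ z, ∫⁻ u, h (e (z, u)) ≤
      ENNReal.ofReal (‖f z‖ ^ s * (D * (1 + ‖z - L c‖ ^ 2 / (K₀ * ℓ) ^ 2) ^ (-M'))) *
        (ENNReal.ofReal (ρ ^ k) * Ck) := by
    intro z
    calc ∫⁻ u, h (e (z, u))
        ≤ ∫⁻ u, ENNReal.ofReal (‖f z‖ ^ s *
              (D * (1 + ‖z - L c‖ ^ 2 / (K₀ * ℓ) ^ 2) ^ (-M'))) *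
            ENNReal.ofReal ((1 + ‖u - c₂‖ ^ 2 / ρ ^ 2) ^ (-(k : ℝ))) :=
          lintegral_mono fun u => hpt z u
      _ = ENNReal.ofReal (‖f z‖ ^ s * (D * (1 + ‖z - L c‖ ^ 2 / (K₀ * ℓ) ^ 2) ^ (-M'))) *
            ∫⁻ u, ENNReal.ofReal ((1 + ‖u - c₂‖ ^ 2 / ρ ^ 2) ^ (-(k : ℝ))) :=
          lintegral_const_mul' _ _ ENNReal.ofReal_ne_top
      _ = ENNReal.ofReal (‖f z‖ ^ s * (D * (1 + ‖z - L c‖ ^ 2 / (K₀ * ℓ) ^ 2) ^ (-M'))) *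
            (ENNReal.ofReal (ρ ^ k) * Ck) := by
          rw [shift_scale k c₂ hρ0, hCkdef]
  set J := ∫⁻ z, ENNReal.ofReal (‖f z‖ ^ s * (1 + ‖z - L c‖ ^ 2 / (K₀ * ℓ) ^ 2) ^ (-M'))
    with hJdef
  have hE1 : ENNReal.ofReal (ρ ^ k) * Ck ≠ ∞ :=
    ENNReal.mul_ne_top ENNReal.ofReal_ne_top hCktop.ne
  have hOuter : ∫⁻ z, ∫⁻ u, h (e (z, u)) ≤
      ENNReal.ofReal D * (ENNReal.ofReal (ρ ^ k) * Ck) * J := by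
    calc ∫⁻ z, ∫⁻ u, h (e (z, u))
        ≤ ∫⁻ z, ENNReal.ofReal (‖f z‖ ^ s *
              (D * (1 + ‖z - L c‖ ^ 2 / (K₀ * ℓ) ^ 2) ^ (-M'))) *
            (ENNReal.ofReal (ρ ^ k) * Ck) := lintegral_mono hInner
      _ = ∫⁻ z, (ENNReal.ofReal D * (ENNReal.ofReal (ρ ^ k) * Ck)) *
            ENNReal.ofReal (‖f z‖ ^ s * (1 + ‖z - L c‖ ^ 2 / (K₀ * ℓ) ^ 2) ^ (-M')) := by
          apply lintegral_congr
          intro z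
          rw [show ‖f z‖ ^ s * (D * (1 + ‖z - L c‖ ^ 2 / (K₀ * ℓ) ^ 2) ^ (-M'))
              = D * (‖f z‖ ^ s * (1 + ‖z - L c‖ ^ 2 / (K₀ * ℓ) ^ 2) ^ (-M')) from by ring,
            ENNReal.ofReal_mul hD0.le]
          ring
      _ = ENNReal.ofReal D * (ENNReal.ofReal (ρ ^ k) * Ck) * J := by
          rw [lintegral_const_mul' _ _ (ENNReal.mul_ne_top ENNReal.ofReal_ne_top hE1), hJdef]
  -- power counting
  have hpow : (ENNReal.ofReal (ℓ ^ d))⁻¹ * ENNReal.ofReal (ρ ^ k)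
      = ENNReal.ofReal ((Real.sqrt 2 * A) ^ k * K₀ ^ d') *
        (ENNReal.ofReal ((K₀ * ℓ) ^ d'))⁻¹ := by
    rw [← ENNReal.ofReal_inv_of_pos (by positivity), ← ENNReal.ofReal_inv_of_pos (by positivity),
      ← ENNReal.ofReal_mul (by positivity), ← ENNReal.ofReal_mul (by positivity)]
    congr 1
    have hld : ℓ ^ d = ℓ ^ d' * ℓ ^ k := by rw [← pow_add, hrank]
    have hℓne : ℓ ≠ 0 := hℓ.ne'
    have hK₀ne : K₀ ≠ 0 := hK₀0.ne'
    rw [hld, hρdef]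
    field_simp
    ring
  have hstep : (ENNReal.ofReal (ℓ ^ d))⁻¹ * ∫⁻ y, h y ≤
      C₁ * ((ENNReal.ofReal ((K₀ * ℓ) ^ d'))⁻¹ * J) := by
    have hIJ : ∫⁻ y, h y ≤ (cH : ℝ≥0∞)⁻¹ *
        (ENNReal.ofReal D * (ENNReal.ofReal (ρ ^ k) * Ck) * J) := by
      rw [hIp, hFub]
      exact mul_le_mul_right hOuter _
    calc (ENNReal.ofReal (ℓ ^ d))⁻¹ * ∫⁻ y, h y
        ≤ (ENNReal.ofReal (ℓ ^ d))⁻¹ * ((cH : ℝ≥0∞)⁻¹ *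
            (ENNReal.ofReal D * (ENNReal.ofReal (ρ ^ k) * Ck) * J)) := mul_le_mul_right hIJ _
      _ = (cH : ℝ≥0∞)⁻¹ * Ck * ENNReal.ofReal D *
            ((ENNReal.ofReal (ℓ ^ d))⁻¹ * ENNReal.ofReal (ρ ^ k)) * J := by ring
      _ = (cH : ℝ≥0∞)⁻¹ * Ck * ENNReal.ofReal D *
            (ENNReal.ofReal ((Real.sqrt 2 * A) ^ k * K₀ ^ d') *
              (ENNReal.ofReal ((K₀ * ℓ) ^ d'))⁻¹) * J := by rw [hpow]
      _ = C₁ * ((ENNReal.ofReal ((K₀ * ℓ) ^ d'))⁻¹ * J) := by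
          rw [hC₁def,
            show (Real.sqrt 2 * A) ^ k * D * K₀ ^ d'
              = D * ((Real.sqrt 2 * A) ^ k * K₀ ^ d') from by ring,
            ENNReal.ofReal_mul hD0.le]
          ring
  calc ((ENNReal.ofReal (ℓ ^ d))⁻¹ *
        ∫⁻ y, ENNReal.ofReal (‖f (L y)‖ ^ s * (1 + ‖y - c‖ ^ 2 / ℓ ^ 2) ^ (-Mexp))) ^ (1 / s)
      ≤ (C₁ * ((ENNReal.ofReal ((K₀ * ℓ) ^ d'))⁻¹ * J)) ^ (1 / s) :=
        ENNReal.rpow_le_rpow hstep (by positivity)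
    _ = C₁ ^ (1 / s) * ((ENNReal.ofReal ((K₀ * ℓ) ^ d'))⁻¹ * J) ^ (1 / s) :=
        ENNReal.mul_rpow_of_nonneg _ _ (by positivity)
    _ ≤ C₁ ^ (1 / s) * smoothMax d' s M' f (L x) := by
        apply mul_le_mul_right
        simp only [smoothMax]
        refine le_iSup_of_le (L c) (le_iSup_of_le (K₀ * ℓ) (le_iSup_of_le (by positivity)
          (le_iSup_of_le hx' ?_)))
        rw [hJdef]
end

section
/- (Loomis–Whitney inequality in $\mathbb{R}^4$.) For measurable functions $f_1,f_2,f_3,f_4$ on $\mathbb{R}^3$, $\Big|\int_{\mathbb{R}^4} f_1(x_2,x_3,x_4)\,f_2(x_1,x_3,x_4)\,f_3(x_1,x_2,x_4)\,f_4(x_1,x_2,x_3)\,dx\Big| \le \|f_1\|_{L^3(\mathbb{R}^3)}\|f_2\|_{L^3(\mathbb{R}^3)}\|f_3\|_{L^3(\mathbb{R}^3)}\|f_4\|_{L^3(\mathbb{R}^3)}$. -/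
open MeasureTheory
open scoped ENNReal

noncomputable section

private lemma holder3 {α : Type*} [MeasurableSpace α] {μ : Measure α} {a b c : α → ℝ≥0∞}
    (ha : Measurable a) (hb : Measurable b) (hc : Measurable c) :
    ∫⁻ x, a x ^ (3:ℝ)⁻¹ * (b x ^ (3:ℝ)⁻¹ * c x ^ (3:ℝ)⁻¹) ∂μ ≤
      (∫⁻ x, a x ∂μ) ^ (3:ℝ)⁻¹ *
        ((∫⁻ x, b x ∂μ) ^ (3:ℝ)⁻¹ * (∫⁻ x, c x ∂μ) ^ (3:ℝ)⁻¹) := by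
  have h := ENNReal.lintegral_prod_norm_pow_le (μ := μ) (Finset.univ : Finset (Fin 3))
    (f := ![a, b, c]) (p := fun _ => (3:ℝ)⁻¹)
    (by rintro i -; fin_cases i <;> simpa using by first | exact ha.aemeasurable | exact hb.aemeasurable | exact hc.aemeasurable)
    (by norm_num [Fin.sum_univ_three])
    (by intro i _; positivity)
  simpa [Fin.prod_univ_three, mul_assoc] using h

private lemma holder_step {α β : Type*} [MeasurableSpace α] [MeasurableSpace β]
    (μ : Measure α) (ν : Measure β) [SFinite μ] [SFinite ν]
    {C : β → ℝ≥0∞} {a b c : α × β → ℝ≥0∞}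
    (hC : Measurable C) (ha : Measurable a) (hb : Measurable b) (hc : Measurable c) :
    ∫⁻ z, C z.2 ^ (3:ℝ)⁻¹ * (a z ^ (3:ℝ)⁻¹ * (b z ^ (3:ℝ)⁻¹ * c z ^ (3:ℝ)⁻¹)) ∂(μ.prod ν) ≤
      ∫⁻ y, C y ^ (3:ℝ)⁻¹ * ((∫⁻ x, a (x, y) ∂μ) ^ (3:ℝ)⁻¹ *
        ((∫⁻ x, b (x, y) ∂μ) ^ (3:ℝ)⁻¹ * (∫⁻ x, c (x, y) ∂μ) ^ (3:ℝ)⁻¹)) ∂ν := by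
  rw [lintegral_prod_symm]
  · refine lintegral_mono fun y => ?_
    have : (∫⁻ x, C (x, y).2 ^ (3:ℝ)⁻¹ * (a (x, y) ^ (3:ℝ)⁻¹ * (b (x, y) ^ (3:ℝ)⁻¹ * c (x, y) ^ (3:ℝ)⁻¹)) ∂μ)
        = ∫⁻ x, C y ^ (3:ℝ)⁻¹ * (a (x, y) ^ (3:ℝ)⁻¹ * (b (x, y) ^ (3:ℝ)⁻¹ * c (x, y) ^ (3:ℝ)⁻¹)) ∂μ := rfl
    rw [this, lintegral_const_mul]
    · refine mul_le_mul_right (holder3 (ha.comp measurable_prodMk_right)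
        (hb.comp measurable_prodMk_right) (hc.comp measurable_prodMk_right)) _
    · exact (((ha.comp measurable_prodMk_right).pow measurable_const).mul
        (((hb.comp measurable_prodMk_right).pow measurable_const).mul
          ((hc.comp measurable_prodMk_right).pow measurable_const)))
  · exact (((hC.comp measurable_snd).pow measurable_const).mul
      ((ha.pow measurable_const).mul
        ((hb.pow measurable_const).mul (hc.pow measurable_const)))).aemeasurable

private lemma LW4 (F₁ F₂ F₃ F₄ : ℝ × ℝ × ℝ → ℝ≥0∞)
    (m₁ : Measurable F₁) (m₂ : Measurable F₂) (m₃ : Measurable F₃) (m₄ : Measurable F₄) :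
    ∫⁻ x : ℝ × ℝ × ℝ × ℝ,
        F₁ (x.2.1, x.2.2.1, x.2.2.2) ^ (3:ℝ)⁻¹ * (F₂ (x.1, x.2.2.1, x.2.2.2) ^ (3:ℝ)⁻¹ *
          (F₃ (x.1, x.2.1, x.2.2.2) ^ (3:ℝ)⁻¹ * F₄ (x.1, x.2.1, x.2.2.1) ^ (3:ℝ)⁻¹))
      ≤ (∫⁻ y, F₁ y) ^ (3:ℝ)⁻¹ * ((∫⁻ y, F₂ y) ^ (3:ℝ)⁻¹ *
          ((∫⁻ y, F₃ y) ^ (3:ℝ)⁻¹ * (∫⁻ y, F₄ y) ^ (3:ℝ)⁻¹)) := by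
  -- marginals over the first coordinate
  set G₂ : ℝ × ℝ → ℝ≥0∞ := fun w => ∫⁻ t, F₂ (t, w.1, w.2) with hG₂
  set G₃ : ℝ × ℝ → ℝ≥0∞ := fun w => ∫⁻ t, F₃ (t, w.1, w.2) with hG₃
  set G₄ : ℝ × ℝ → ℝ≥0∞ := fun w => ∫⁻ t, F₄ (t, w.1, w.2) with hG₄
  have mG₂ : Measurable G₂ := Measurable.lintegral_prod_right'
    (f := fun z : (ℝ × ℝ) × ℝ => F₂ (z.2, z.1.1, z.1.2)) (by fun_prop)
  have mG₃ : Measurable G₃ := Measurable.lintegral_prod_right'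
    (f := fun z : (ℝ × ℝ) × ℝ => F₃ (z.2, z.1.1, z.1.2)) (by fun_prop)
  have mG₄ : Measurable G₄ := Measurable.lintegral_prod_right'
    (f := fun z : (ℝ × ℝ) × ℝ => F₄ (z.2, z.1.1, z.1.2)) (by fun_prop)
  -- second-level marginals
  set A : ℝ × ℝ → ℝ≥0∞ := fun w => ∫⁻ t, F₁ (t, w.1, w.2) with hA
  have mA : Measurable A := Measurable.lintegral_prod_right'
    (f := fun z : (ℝ × ℝ) × ℝ => F₁ (z.2, z.1.1, z.1.2)) (by fun_prop)
  set H₃ : ℝ → ℝ≥0∞ := fun y₃ => ∫⁻ t, G₃ (t, y₃) with hH₃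
  set H₄ : ℝ → ℝ≥0∞ := fun y₂ => ∫⁻ t, G₄ (t, y₂) with hH₄
  have mH₃ : Measurable H₃ := Measurable.lintegral_prod_right'
    (f := fun z : ℝ × ℝ => G₃ (z.2, z.1)) (by fun_prop)
  have mH₄ : Measurable H₄ := Measurable.lintegral_prod_right'
    (f := fun z : ℝ × ℝ => G₄ (z.2, z.1)) (by fun_prop)
  have key : ∫⁻ x : ℝ × ℝ × ℝ × ℝ,
        F₁ (x.2.1, x.2.2.1, x.2.2.2) ^ (3:ℝ)⁻¹ * (F₂ (x.1, x.2.2.1, x.2.2.2) ^ (3:ℝ)⁻¹ *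
          (F₃ (x.1, x.2.1, x.2.2.2) ^ (3:ℝ)⁻¹ * F₄ (x.1, x.2.1, x.2.2.1) ^ (3:ℝ)⁻¹))
      ≤ ∫⁻ y : ℝ × ℝ × ℝ, F₁ y ^ (3:ℝ)⁻¹ * (G₂ (y.2.1, y.2.2) ^ (3:ℝ)⁻¹ *
          (G₃ (y.1, y.2.2) ^ (3:ℝ)⁻¹ * G₄ (y.1, y.2.1) ^ (3:ℝ)⁻¹)) := by
    rw [show (volume : Measure (ℝ × ℝ × ℝ × ℝ)) = Measure.prod volume volume from Measure.volume_eq_prod ..]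
    exact holder_step volume volume (C := F₁)
      (a := fun z : ℝ × (ℝ × ℝ × ℝ) => F₂ (z.1, z.2.2.1, z.2.2.2))
      (b := fun z : ℝ × (ℝ × ℝ × ℝ) => F₃ (z.1, z.2.1, z.2.2.2))
      (c := fun z : ℝ × (ℝ × ℝ × ℝ) => F₄ (z.1, z.2.1, z.2.2.1))
      m₁ (by fun_prop) (by fun_prop) (by fun_prop)
  have key2 : ∫⁻ y : ℝ × ℝ × ℝ, F₁ y ^ (3:ℝ)⁻¹ * (G₂ (y.2.1, y.2.2) ^ (3:ℝ)⁻¹ *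
          (G₃ (y.1, y.2.2) ^ (3:ℝ)⁻¹ * G₄ (y.1, y.2.1) ^ (3:ℝ)⁻¹))
      ≤ ∫⁻ w : ℝ × ℝ, G₂ w ^ (3:ℝ)⁻¹ * (A w ^ (3:ℝ)⁻¹ *
          (H₃ w.2 ^ (3:ℝ)⁻¹ * H₄ w.1 ^ (3:ℝ)⁻¹)) := by
    have : ∫⁻ y : ℝ × ℝ × ℝ, F₁ y ^ (3:ℝ)⁻¹ * (G₂ (y.2.1, y.2.2) ^ (3:ℝ)⁻¹ *
          (G₃ (y.1, y.2.2) ^ (3:ℝ)⁻¹ * G₄ (y.1, y.2.1) ^ (3:ℝ)⁻¹))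
        = ∫⁻ y : ℝ × ℝ × ℝ, G₂ (y.2.1, y.2.2) ^ (3:ℝ)⁻¹ * (F₁ y ^ (3:ℝ)⁻¹ *
          (G₃ (y.1, y.2.2) ^ (3:ℝ)⁻¹ * G₄ (y.1, y.2.1) ^ (3:ℝ)⁻¹)) :=
      lintegral_congr fun y => by ring
    rw [this, show (volume : Measure (ℝ × ℝ × ℝ)) = Measure.prod volume volume from Measure.volume_eq_prod ..]
    exact holder_step volume volume (C := fun w : ℝ × ℝ => G₂ (w.1, w.2))
      (a := fun z : ℝ × (ℝ × ℝ) => F₁ (z.1, z.2.1, z.2.2))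
      (b := fun z : ℝ × (ℝ × ℝ) => G₃ (z.1, z.2.2))
      (c := fun z : ℝ × (ℝ × ℝ) => G₄ (z.1, z.2.1))
      (by fun_prop) (by fun_prop) (by fun_prop) (by fun_prop)
  have key3 : ∫⁻ w : ℝ × ℝ, G₂ w ^ (3:ℝ)⁻¹ * (A w ^ (3:ℝ)⁻¹ *
          (H₃ w.2 ^ (3:ℝ)⁻¹ * H₄ w.1 ^ (3:ℝ)⁻¹))
      ≤ ∫⁻ y₃ : ℝ, H₃ y₃ ^ (3:ℝ)⁻¹ * ((∫⁻ t, G₂ (t, y₃)) ^ (3:ℝ)⁻¹ *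
          ((∫⁻ t, A (t, y₃)) ^ (3:ℝ)⁻¹ * (∫⁻ t, H₄ t) ^ (3:ℝ)⁻¹)) := by
    have : ∫⁻ w : ℝ × ℝ, G₂ w ^ (3:ℝ)⁻¹ * (A w ^ (3:ℝ)⁻¹ *
          (H₃ w.2 ^ (3:ℝ)⁻¹ * H₄ w.1 ^ (3:ℝ)⁻¹))
        = ∫⁻ w : ℝ × ℝ, H₃ w.2 ^ (3:ℝ)⁻¹ * (G₂ w ^ (3:ℝ)⁻¹ *
          (A w ^ (3:ℝ)⁻¹ * H₄ w.1 ^ (3:ℝ)⁻¹)) :=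
      lintegral_congr fun w => by ring
    rw [this, show (volume : Measure (ℝ × ℝ)) = Measure.prod volume volume from Measure.volume_eq_prod ..]
    exact holder_step volume volume (C := H₃)
      (a := fun z : ℝ × ℝ => G₂ (z.1, z.2))
      (b := fun z : ℝ × ℝ => A (z.1, z.2))
      (c := fun z : ℝ × ℝ => H₄ z.1)
      mH₃ (by fun_prop) (by fun_prop) (by fun_prop)
  have key4 : ∫⁻ y₃ : ℝ, H₃ y₃ ^ (3:ℝ)⁻¹ * ((∫⁻ t, G₂ (t, y₃)) ^ (3:ℝ)⁻¹ *
          ((∫⁻ t, A (t, y₃)) ^ (3:ℝ)⁻¹ * (∫⁻ t, H₄ t) ^ (3:ℝ)⁻¹))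
      ≤ (∫⁻ y₃, H₃ y₃) ^ (3:ℝ)⁻¹ * ((∫⁻ y₃, ∫⁻ t, G₂ (t, y₃)) ^ (3:ℝ)⁻¹ *
          ((∫⁻ y₃, ∫⁻ t, A (t, y₃)) ^ (3:ℝ)⁻¹ * (∫⁻ t, H₄ t) ^ (3:ℝ)⁻¹)) := by
    have mK₂ : Measurable fun y₃ : ℝ => ∫⁻ t, G₂ (t, y₃) := Measurable.lintegral_prod_right'
      (f := fun z : ℝ × ℝ => G₂ (z.2, z.1)) (by fun_prop)
    have mK₁ : Measurable fun y₃ : ℝ => ∫⁻ t, A (t, y₃) := Measurable.lintegral_prod_right'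
      (f := fun z : ℝ × ℝ => A (z.2, z.1)) (by fun_prop)
    have e1 : ∫⁻ y₃ : ℝ, H₃ y₃ ^ (3:ℝ)⁻¹ * ((∫⁻ t, G₂ (t, y₃)) ^ (3:ℝ)⁻¹ *
          ((∫⁻ t, A (t, y₃)) ^ (3:ℝ)⁻¹ * (∫⁻ t, H₄ t) ^ (3:ℝ)⁻¹))
        = ∫⁻ y₃ : ℝ, (∫⁻ t, H₄ t) ^ (3:ℝ)⁻¹ * (H₃ y₃ ^ (3:ℝ)⁻¹ *
          ((∫⁻ t, G₂ (t, y₃)) ^ (3:ℝ)⁻¹ * (∫⁻ t, A (t, y₃)) ^ (3:ℝ)⁻¹)) :=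
      lintegral_congr fun y₃ => by ring
    rw [e1, lintegral_const_mul]
    · calc (∫⁻ t, H₄ t) ^ (3:ℝ)⁻¹ * ∫⁻ y₃ : ℝ, H₃ y₃ ^ (3:ℝ)⁻¹ *
            ((∫⁻ t, G₂ (t, y₃)) ^ (3:ℝ)⁻¹ * (∫⁻ t, A (t, y₃)) ^ (3:ℝ)⁻¹)
          ≤ (∫⁻ t, H₄ t) ^ (3:ℝ)⁻¹ * ((∫⁻ y₃, H₃ y₃) ^ (3:ℝ)⁻¹ *
            ((∫⁻ y₃, ∫⁻ t, G₂ (t, y₃)) ^ (3:ℝ)⁻¹ * (∫⁻ y₃, ∫⁻ t, A (t, y₃)) ^ (3:ℝ)⁻¹)) :=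
            mul_le_mul_right (holder3 mH₃ mK₂ mK₁) _
        _ = (∫⁻ y₃, H₃ y₃) ^ (3:ℝ)⁻¹ * ((∫⁻ y₃, ∫⁻ t, G₂ (t, y₃)) ^ (3:ℝ)⁻¹ *
            ((∫⁻ y₃, ∫⁻ t, A (t, y₃)) ^ (3:ℝ)⁻¹ * (∫⁻ t, H₄ t) ^ (3:ℝ)⁻¹)) := by ring
    · exact (mH₃.pow measurable_const).mul
        ((mK₂.pow measurable_const).mul (mK₁.pow measurable_const))
  -- identify the iterated integrals with the full integrals
  have swap2 : ∀ (g : ℝ × ℝ → ℝ≥0∞), Measurable g →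
      (∫⁻ w : ℝ × ℝ, g w) = ∫⁻ y₃ : ℝ, ∫⁻ t : ℝ, g (t, y₃) := by
    intro g hg
    rw [show (volume : Measure (ℝ × ℝ)) = Measure.prod volume volume from Measure.volume_eq_prod ..,
      lintegral_prod_symm _ hg.aemeasurable]
  have swap3 : ∀ (g : ℝ × ℝ × ℝ → ℝ≥0∞), Measurable g →
      (∫⁻ y : ℝ × ℝ × ℝ, g y) = ∫⁻ w : ℝ × ℝ, ∫⁻ t : ℝ, g (t, w.1, w.2) := by
    intro g hg
    rw [show (volume : Measure (ℝ × ℝ × ℝ)) = Measure.prod volume volume from Measure.volume_eq_prod ..,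
      lintegral_prod_symm _ hg.aemeasurable]
  have i₁ : (∫⁻ y, F₁ y) = ∫⁻ y₃, ∫⁻ t, A (t, y₃) := by
    rw [swap3 F₁ m₁, swap2 A mA]
  have i₂ : (∫⁻ y, F₂ y) = ∫⁻ y₃, ∫⁻ t, G₂ (t, y₃) := by
    rw [swap3 F₂ m₂, swap2 G₂ mG₂]
  have i₃ : (∫⁻ y, F₃ y) = ∫⁻ y₃, H₃ y₃ := by
    rw [swap3 F₃ m₃, swap2 G₃ mG₃]
  have i₄ : (∫⁻ y, F₄ y) = ∫⁻ t, H₄ t := by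
    rw [swap3 F₄ m₄, swap2 G₄ mG₄]
  calc _ ≤ _ := key
    _ ≤ _ := key2
    _ ≤ _ := key3
    _ ≤ _ := key4
    _ = (∫⁻ y, F₁ y) ^ (3:ℝ)⁻¹ * ((∫⁻ y, F₂ y) ^ (3:ℝ)⁻¹ *
          ((∫⁻ y, F₃ y) ^ (3:ℝ)⁻¹ * (∫⁻ y, F₄ y) ^ (3:ℝ)⁻¹)) := by
        rw [i₁, i₂, i₃, i₄]; ring

end

open scoped ENNReal

/-- The Loomis–Whitney inequality in `ℝ⁴`:
`|∫_{ℝ⁴} f₁(x₂,x₃,x₄) f₂(x₁,x₃,x₄) f₃(x₁,x₂,x₄) f₄(x₁,x₂,x₃) dx|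
  ≤ ‖f₁‖_{L³(ℝ³)} ‖f₂‖_{L³(ℝ³)} ‖f₃‖_{L³(ℝ³)} ‖f₄‖_{L³(ℝ³)}`. -/
theorem stmt11 (f₁ f₂ f₃ f₄ : ℝ × ℝ × ℝ → ℝ)
    (h₁ : Measurable f₁) (h₂ : Measurable f₂) (h₃ : Measurable f₃) (h₄ : Measurable f₄) :
    ENNReal.ofReal
        |∫ x : ℝ × ℝ × ℝ × ℝ,
            f₁ (x.2.1, x.2.2.1, x.2.2.2) * f₂ (x.1, x.2.2.1, x.2.2.2) *
              f₃ (x.1, x.2.1, x.2.2.2) * f₄ (x.1, x.2.1, x.2.2.1)|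
      ≤ eLpNorm f₁ 3 volume * eLpNorm f₂ 3 volume * eLpNorm f₃ 3 volume *
          eLpNorm f₄ 3 volume := by
  have key := LW4 (fun y => (‖f₁ y‖₊ : ℝ≥0∞) ^ (3:ℕ)) (fun y => (‖f₂ y‖₊ : ℝ≥0∞) ^ (3:ℕ))
    (fun y => (‖f₃ y‖₊ : ℝ≥0∞) ^ (3:ℕ)) (fun y => (‖f₄ y‖₊ : ℝ≥0∞) ^ (3:ℕ))
    (by fun_prop) (by fun_prop) (by fun_prop) (by fun_prop)
  have cube : ∀ u : ℝ≥0∞, (u ^ (3:ℕ)) ^ ((3:ℝ)⁻¹) = u := by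
    intro u
    rw [← ENNReal.rpow_natCast u 3, ← ENNReal.rpow_mul]
    norm_num
  have elp : ∀ f : ℝ × ℝ × ℝ → ℝ,
      eLpNorm f 3 volume = (∫⁻ y, (‖f y‖₊ : ℝ≥0∞) ^ (3:ℕ)) ^ ((3:ℝ)⁻¹) := by
    intro f
    rw [eLpNorm_eq_lintegral_rpow_enorm_toReal (by norm_num) (by norm_num)]
    have h3 : ((3 : ℝ≥0∞).toReal) = ((3:ℕ) : ℝ) := by norm_num
    simp only [h3, ENNReal.rpow_natCast, one_div, enorm_eq_nnnorm]
    norm_num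
  calc ENNReal.ofReal |∫ x : ℝ × ℝ × ℝ × ℝ,
            f₁ (x.2.1, x.2.2.1, x.2.2.2) * f₂ (x.1, x.2.2.1, x.2.2.2) *
              f₃ (x.1, x.2.1, x.2.2.2) * f₄ (x.1, x.2.1, x.2.2.1)|
      = (‖∫ x : ℝ × ℝ × ℝ × ℝ,
            f₁ (x.2.1, x.2.2.1, x.2.2.2) * f₂ (x.1, x.2.2.1, x.2.2.2) *
              f₃ (x.1, x.2.1, x.2.2.2) * f₄ (x.1, x.2.1, x.2.2.1)‖₊ : ℝ≥0∞) :=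
        (Real.enorm_eq_ofReal_abs _).symm
    _ ≤ ∫⁻ x : ℝ × ℝ × ℝ × ℝ, (‖f₁ (x.2.1, x.2.2.1, x.2.2.2) * f₂ (x.1, x.2.2.1, x.2.2.2) *
              f₃ (x.1, x.2.1, x.2.2.2) * f₄ (x.1, x.2.1, x.2.2.1)‖₊ : ℝ≥0∞) :=
        enorm_integral_le_lintegral_enorm _
    _ = ∫⁻ x : ℝ × ℝ × ℝ × ℝ,
          ((‖f₁ (x.2.1, x.2.2.1, x.2.2.2)‖₊ : ℝ≥0∞) ^ (3:ℕ)) ^ ((3:ℝ)⁻¹) *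
            (((‖f₂ (x.1, x.2.2.1, x.2.2.2)‖₊ : ℝ≥0∞) ^ (3:ℕ)) ^ ((3:ℝ)⁻¹) *
              (((‖f₃ (x.1, x.2.1, x.2.2.2)‖₊ : ℝ≥0∞) ^ (3:ℕ)) ^ ((3:ℝ)⁻¹) *
                ((‖f₄ (x.1, x.2.1, x.2.2.1)‖₊ : ℝ≥0∞) ^ (3:ℕ)) ^ ((3:ℝ)⁻¹))) := by
        refine lintegral_congr fun x => ?_
        simp only [cube, nnnorm_mul, ENNReal.coe_mul]
        ring
    _ ≤ (∫⁻ y, (‖f₁ y‖₊ : ℝ≥0∞) ^ (3:ℕ)) ^ ((3:ℝ)⁻¹) *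
          ((∫⁻ y, (‖f₂ y‖₊ : ℝ≥0∞) ^ (3:ℕ)) ^ ((3:ℝ)⁻¹) *
            ((∫⁻ y, (‖f₃ y‖₊ : ℝ≥0∞) ^ (3:ℕ)) ^ ((3:ℝ)⁻¹) *
              (∫⁻ y, (‖f₄ y‖₊ : ℝ≥0∞) ^ (3:ℕ)) ^ ((3:ℝ)⁻¹))) := key
    _ = eLpNorm f₁ 3 volume * eLpNorm f₂ 3 volume * eLpNorm f₃ 3 volume *
          eLpNorm f₄ 3 volume := by
        rw [elp f₁, elp f₂, elp f₃, elp f₄]; ring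
end

section
/- (Finner-type corollary for projections.) Let $d\ge 1$ and for $1\le j\le n+1$ let $\sigma_j\subseteq\{1,\ldots,d\}$ be sets of coordinates with $|\sigma_j|=d_j$ and let $P_{\sigma_j}:\mathbb{R}^d\to\mathbb{R}^{d_j}$ be the coordinate projections. Suppose exponents $p_j^i\in(0,\infty]$ (for $i\in\sigma_j$) satisfy, for every coordinate $i\in\{1,\ldots,d\}$, $\sum_{j:\, i\in\sigma_j} \frac{1}{p_j^i} = 1$. Then, for nonnegative measurable functions $f_j$ on $\mathbb{R}^{d_j}$, $\int_{\mathbb{R}^d} \prod_{j=1}^{n+1} f_j(P_{\sigma_j}x)\,dx \le \prod_{j=1}^{n+1} \|f_j\|_{L^{P_j}(\mathbb{R}^{d_j})}$, where $L^{P_j}$ is the mixed norm with exponent $p_j^i$ in the coordinate $i\in\sigma_j$ (taken in increasing coordinate order, innermost last coordinate), and where the norm of $f_j$ viewed as a function on $\mathbb{R}^d$ with $L^\infty$ in the missing coordinates equals $\|f_j\|_{L^{P_j}(\mathbb{R}^{d_j})}$. -/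
open MeasureTheory ENNReal

/-- The one-variable `L^q` norm (for `q ∈ (0,∞]`) of an `ℝ≥0∞`-valued function on `ℝ`. -/
noncomputable def lnorm (q : ℝ≥0∞) (g : ℝ → ℝ≥0∞) : ℝ≥0∞ :=
  if q = ∞ then essSup g volume else (∫⁻ t, g t ^ q.toReal) ^ (1 / q.toReal)

/-- The iterated mixed norm `‖F‖_{L^{p¹}_{x₁} ⋯ L^{p^d}_{x_d}}` on `ℝ^d`,
computed innermost in the last coordinate. -/
noncomputable def mixedNorm : (d : ℕ) → (Fin d → ℝ≥0∞) → ((Fin d → ℝ) → ℝ≥0∞) → ℝ≥0∞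
  | 0, _, F => F fun i => i.elim0
  | (d + 1), p, F =>
      lnorm (p 0) fun t => mixedNorm d (fun i => p i.succ) fun y => F (Fin.cons t y)

lemma measurable_essSup_param {α : Type} [MeasurableSpace α]
    {H : α → ℝ → ℝ≥0∞} (hH : Measurable fun z : α × ℝ => H z.1 z.2) :
    Measurable fun a => essSup (H a) volume := by
  classical
  have hm : ∀ c : ℝ≥0∞, Measurable fun a => volume {t | c < H a t} := by
    intro c
    exact measurable_measure_prodMk_left (measurableSet_lt measurable_const hH)
  have key : (fun a => essSup (H a) volume) = fun a =>
      ⨅ (q : ℚ) (_ : volume {t | (Real.toNNReal q : ℝ≥0∞) < H a t} = 0),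
        ((Real.toNNReal q : ℝ≥0∞)) := by
    funext a
    rw [essSup_eq_sInf]
    apply le_antisymm
    · exact le_iInf fun q => le_iInf fun hq => sInf_le hq
    · refine le_of_forall_gt_imp_ge_of_dense fun b hb => ?_
      obtain ⟨c, hcS, hcb⟩ := sInf_lt_iff.1 hb
      obtain ⟨q, hq0, hcq, hqb⟩ := ENNReal.lt_iff_exists_rat_btwn.1 hcb
      have hq : volume {t | (Real.toNNReal q : ℝ≥0∞) < H a t} = 0 :=
        measure_mono_null (fun t ht => lt_trans hcq ht) hcS
      exact le_trans (iInf₂_le q hq) hqb.le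
  rw [key]
  refine Measurable.iInf fun q => ?_
  have : (fun a => ⨅ (_ : volume {t | (Real.toNNReal q : ℝ≥0∞) < H a t} = 0),
      ((Real.toNNReal q : ℝ≥0∞))) = fun a =>
        if volume {t | (Real.toNNReal q : ℝ≥0∞) < H a t} = 0
        then ((Real.toNNReal q : ℝ≥0∞)) else ⊤ := by
    funext a; split_ifs with h <;> simp [h]
  rw [this]
  exact Measurable.ite ((hm _) (measurableSet_singleton 0)) measurable_const measurable_const

lemma measurable_fin_cons_prod (d : ℕ) :
    Measurable fun z : ℝ × (Fin d → ℝ) => (Fin.cons z.1 z.2 : Fin (d + 1) → ℝ) := by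
  refine measurable_pi_iff.2 fun i => ?_
  refine Fin.cases ?_ ?_ i
  · simpa using measurable_fst
  · intro k; simp only [Fin.cons_succ]; exact (measurable_pi_apply k).comp measurable_snd

lemma measurable_mixedNorm_param (d : ℕ) :
    ∀ {α : Type} [MeasurableSpace α] (q : Fin d → ℝ≥0∞) (F : α → (Fin d → ℝ) → ℝ≥0∞),
      Measurable (fun z : α × (Fin d → ℝ) => F z.1 z.2) →
      Measurable fun a => mixedNorm d q (F a) := by
  induction d with
  | zero =>
    intro α _ q F hF
    simp only [mixedNorm]
    exact hF.comp (measurable_id.prodMk measurable_const)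
  | succ d ih =>
    intro α _ q F hF
    have hcons := measurable_fin_cons_prod d
    have hH : Measurable fun z : (α × ℝ) × (Fin d → ℝ) => F z.1.1 (Fin.cons z.1.2 z.2) := by
      have h1 : Measurable fun z : (α × ℝ) × (Fin d → ℝ) =>
          ((z.1.1, Fin.cons z.1.2 z.2) : α × (Fin (d+1) → ℝ)) :=
        (measurable_fst.comp measurable_fst).prodMk
          (hcons.comp ((measurable_snd.comp measurable_fst).prodMk measurable_snd))
      exact hF.comp h1
    have hIH : Measurable fun w : α × ℝ =>
        mixedNorm d (fun i => q i.succ) (fun y => F w.1 (Fin.cons w.2 y)) :=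
      ih _ _ hH
    simp only [mixedNorm]
    unfold lnorm
    by_cases hq : q 0 = ∞
    · simp only [hq, if_true]
      exact measurable_essSup_param hIH
    · simp only [hq, if_false]
      have h1 : Measurable fun w : α × ℝ =>
          (mixedNorm d (fun i => q i.succ) fun y => F w.1 (Fin.cons w.2 y)) ^ (q 0).toReal :=
        ENNReal.continuous_rpow_const.measurable.comp hIH
      exact ENNReal.continuous_rpow_const.measurable.comp h1.lintegral_prod_right'

lemma lnorm_holder {ι : Type} [Fintype ι] (p : ι → ℝ≥0∞) (hp : ∀ j, 0 < p j)
    (hsum : ∑ j, (p j)⁻¹ = 1) (g : ι → ℝ → ℝ≥0∞) (hg : ∀ j, Measurable (g j)) :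
    (∫⁻ t, ∏ j, g j t) ≤ ∏ j, lnorm (p j) (g j) := by
  classical
  set S : Finset ι := Finset.univ.filter fun j => p j = ∞ with hSdef
  set T : Finset ι := Finset.univ.filter fun j => ¬p j = ∞ with hTdef
  have hmemT : ∀ j, j ∈ T ↔ p j ≠ ∞ := by intro j; simp [hTdef]
  have hmemS : ∀ j, j ∈ S ↔ p j = ∞ := by intro j; simp [hSdef]
  -- sum of reciprocals over T
  have hsumT : ∑ j ∈ T, (p j)⁻¹ = 1 := by
    rw [← hsum]
    refine Finset.sum_subset (Finset.subset_univ T) fun j _ hj => ?_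
    have : p j = ∞ := by by_contra h; exact hj ((hmemT j).2 h)
    simp [this]
  have hTsum : ∑ j ∈ T, ((p j)⁻¹).toReal = 1 := by
    rw [← ENNReal.toReal_sum (fun j _ => ENNReal.inv_ne_top.2 (hp j).ne'), hsumT,
      ENNReal.toReal_one]
  -- Hölder over T
  have hTholder : (∫⁻ t, ∏ j ∈ T, g j t) ≤
      ∏ j ∈ T, (∫⁻ t, g j t ^ (p j).toReal) ^ (1 / (p j).toReal) := by
    have hpt : ∀ j ∈ T, ∀ t : ℝ, (g j t ^ (p j).toReal) ^ ((p j)⁻¹).toReal = g j t := by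
      intro j hj t
      have hne : (p j).toReal ≠ 0 :=
        ENNReal.toReal_ne_zero.2 ⟨(hp j).ne', (hmemT j).1 hj⟩
      rw [← ENNReal.rpow_mul, ENNReal.toReal_inv, mul_inv_cancel₀ hne, ENNReal.rpow_one]
    have key := ENNReal.lintegral_prod_norm_pow_le (μ := (volume : Measure ℝ)) T
      (f := fun j t => g j t ^ (p j).toReal) (p := fun j => ((p j)⁻¹).toReal)
      (fun j _ => (ENNReal.continuous_rpow_const.measurable.comp (hg j)).aemeasurable)
      hTsum (fun j _ => ENNReal.toReal_nonneg)
    calc (∫⁻ t, ∏ j ∈ T, g j t)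
        = ∫⁻ t, ∏ j ∈ T, (g j t ^ (p j).toReal) ^ ((p j)⁻¹).toReal := by
          congr 1; funext t
          exact (Finset.prod_congr rfl fun j hj => hpt j hj t).symm
      _ ≤ ∏ j ∈ T, (∫⁻ t, g j t ^ (p j).toReal) ^ ((p j)⁻¹).toReal := key
      _ = ∏ j ∈ T, (∫⁻ t, g j t ^ (p j).toReal) ^ (1 / (p j).toReal) := by
          exact Finset.prod_congr rfl fun j hj => by rw [ENNReal.toReal_inv, one_div]
  -- a.e. bound for the ∞ part
  have hae : ∀ᵐ t : ℝ, ∀ j, j ∈ S → g j t ≤ essSup (g j) volume := by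
    rw [Filter.eventually_all]
    intro j
    by_cases hj : j ∈ S
    · exact (ae_le_essSup (g j)).mono fun t h _ => h
    · exact Filter.Eventually.of_forall fun t h => absurd h hj
  have hsplit : ∀ f : ι → ℝ≥0∞, ∏ j, f j = (∏ j ∈ S, f j) * ∏ j ∈ T, f j := fun f =>
    (Finset.prod_filter_mul_prod_filter_not Finset.univ (fun j => p j = ∞) f).symm
  calc (∫⁻ t, ∏ j, g j t)
      = ∫⁻ t, (∏ j ∈ S, g j t) * ∏ j ∈ T, g j t := by
        congr 1; funext t; exact hsplit _
    _ ≤ ∫⁻ t, (∏ j ∈ S, essSup (g j) volume) * ∏ j ∈ T, g j t := by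
        refine lintegral_mono_ae (hae.mono fun t ht => ?_)
        exact mul_le_mul' (Finset.prod_le_prod' fun j hj => ht j hj) le_rfl
    _ = (∏ j ∈ S, essSup (g j) volume) * ∫⁻ t, ∏ j ∈ T, g j t :=
        lintegral_const_mul _ (Finset.measurable_prod T fun j _ => hg j)
    _ ≤ (∏ j ∈ S, essSup (g j) volume) *
        ∏ j ∈ T, (∫⁻ t, g j t ^ (p j).toReal) ^ (1 / (p j).toReal) :=
        mul_le_mul' le_rfl hTholder
    _ = ∏ j, lnorm (p j) (g j) := by
        rw [hsplit fun j => lnorm (p j) (g j)]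
        congr 1
        · exact Finset.prod_congr rfl fun j hj => by simp [lnorm, (hmemS j).1 hj]
        · exact Finset.prod_congr rfl fun j hj => by simp [lnorm, (hmemT j).1 hj]

lemma finner_aux (d : ℕ) :
    ∀ {ι : Type} [Fintype ι] (p : ι → Fin d → ℝ≥0∞),
      (∀ j i, 0 < p j i) → (∀ i, ∑ j, (p j i)⁻¹ = 1) →
      ∀ (F : ι → (Fin d → ℝ) → ℝ≥0∞), (∀ j, Measurable (F j)) →
      (∫⁻ x, ∏ j, F j x) ≤ ∏ j, mixedNorm d (p j) (F j) := by
  induction d with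
  | zero =>
    intro ι _ p hp hH F hF
    have hx : ∀ x : Fin 0 → ℝ, x = fun i => i.elim0 := fun x => funext fun i => i.elim0
    have huniv : (volume : Measure (Fin 0 → ℝ)) Set.univ = 1 := by
      rw [volume_pi, Measure.pi_univ]; simp
    refine le_of_eq ?_
    calc (∫⁻ x, ∏ j, F j x) = ∫⁻ _x : Fin 0 → ℝ, ∏ j, F j (fun i => i.elim0) := by
          congr 1; funext x; rw [← hx x]
      _ = ∏ j, F j (fun i => i.elim0) := by rw [lintegral_const, huniv, mul_one]
      _ = ∏ j, mixedNorm 0 (p j) (F j) := by simp [mixedNorm]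
  | succ d ih =>
    intro ι _ p hp hH F hF
    have hcons := measurable_fin_cons_prod d
    have e := (volume_preserving_piFinSuccAbove (fun _ : Fin (d + 1) => ℝ) 0).symm
    have hmeas_prod : Measurable fun x : Fin (d + 1) → ℝ => ∏ j, F j x :=
      Finset.measurable_prod _ fun j _ => hF j
    have hg : ∀ j, Measurable fun t : ℝ => mixedNorm d (fun i => p j i.succ)
        (fun y => F j (Fin.cons t y)) := fun j =>
      measurable_mixedNorm_param d _ _ ((hF j).comp hcons)
    calc (∫⁻ x : Fin (d + 1) → ℝ, ∏ j, F j x)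
        = ∫⁻ z : ℝ × (Fin d → ℝ), ∏ j, F j (Fin.cons z.1 z.2) := by
          rw [← e.lintegral_comp hmeas_prod]
          congr 1; funext z
          congr 1
          simp [MeasurableEquiv.piFinSuccAbove_symm_apply, Fin.insertNth_zero', Fin.consEquiv]
      _ = ∫⁻ t, ∫⁻ y, ∏ j, F j (Fin.cons t y) := by
          rw [Measure.volume_eq_prod, lintegral_prod]
          exact (hmeas_prod.comp hcons).aemeasurable
      _ ≤ ∫⁻ t, ∏ j, mixedNorm d (fun i => p j i.succ) (fun y => F j (Fin.cons t y)) := by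
          refine lintegral_mono fun t => ?_
          exact ih (fun j i => p j i.succ) (fun j i => hp j i.succ) (fun i => hH i.succ)
            (fun j y => F j (Fin.cons t y))
            (fun j => (hF j).comp (hcons.comp (measurable_const.prodMk measurable_id)))
      _ ≤ ∏ j, lnorm (p j 0)
            (fun t => mixedNorm d (fun i => p j i.succ) (fun y => F j (Fin.cons t y))) :=
          lnorm_holder (fun j => p j 0) (fun j => hp j 0) (hH 0) _ hg
      _ = ∏ j, mixedNorm (d + 1) (p j) (F j) := by simp only [mixedNorm]

/-- Finner-type mixed-norm Hölder inequality for coordinate projections: if each `Fⱼ`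
depends only on the coordinates in `σⱼ ⊆ {1,…,d}`, the exponents `pⱼⁱ` are `∞` off `σⱼ`
and positive on `σⱼ`, and for every coordinate `i` one has `∑ⱼ 1/pⱼⁱ = 1`, then
`∫_{ℝ^d} ∏ⱼ Fⱼ ≤ ∏ⱼ ‖Fⱼ‖_{L^{Pⱼ}}` (the mixed norm on `ℝ^d` with `L^∞` in the missing
coordinates, which equals the mixed norm of `fⱼ` on `ℝ^{dⱼ}`). -/
theorem stmt17 (d n : ℕ) (σ : Fin (n + 1) → Finset (Fin d))
    (p : Fin (n + 1) → Fin d → ℝ≥0∞)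
    (hpinf : ∀ j i, i ∉ σ j → p j i = ∞)
    (hppos : ∀ j i, i ∈ σ j → 0 < p j i)
    (hHolder : ∀ i : Fin d, ∑ j, (p j i)⁻¹ = 1)
    (F : Fin (n + 1) → (Fin d → ℝ) → ℝ≥0∞)
    (hFmeas : ∀ j, Measurable (F j))
    (hFdep : ∀ j x y, (∀ i ∈ σ j, x i = y i) → F j x = F j y) :
    (∫⁻ x, ∏ j, F j x) ≤ ∏ j, mixedNorm d (p j) (F j) := by
  refine finner_aux d p (fun j i => ?_) hHolder F hFmeas
  by_cases h : i ∈ σ j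
  · exact hppos j i h
  · rw [hpinf j i h]; exact ENNReal.zero_lt_top
end
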